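/- arXiv:1912.00427 — 3 statements merged into one kernel-verified Lean document; each statement's English description precedes it below -/
import Mathlib

section
/- Let P be a poset of type A with at least two maximal elements, and let z and z' be distinct maximal elements of P. Then z and z' are neighbors (i.e., D(z) ∩ D(z') ≠ ∅) if and only if D(z) ∩ D(z') = {x} for some minimal element x of P. -/
/-! ## Relation-based poset notions -/

/-- `x` and `y` are incomparable with respect to the relation `le`. -/
def RIncomp {α : Type*} (le : α → α → Prop) (x y : α) : Prop := ¬ le x y ∧ ¬ le y x

/-- The strict relation associated to `le`. -/
def RLt {α : Type*} (le : α → α → Prop) (x y : α) : Prop := le x y ∧ ¬ le y x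

/-- `z` is a maximal element with respect to `le`. -/
def RIsMax {α : Type*} (le : α → α → Prop) (z : α) : Prop := ∀ x, le z x → le x z

/-- `z` is a minimal element with respect to `le`. -/
def RIsMin {α : Type*} (le : α → α → Prop) (z : α) : Prop := ∀ x, le x z → le z x

/-- The down-cone `D(a) = {x | x ≤ a}`. -/
def RDown {α : Type*} (le : α → α → Prop) (a : α) : Set α := {x | le x a}

/-- The comparability graph of the relation `le`: vertices are the elements,
edges join comparable distinct elements. -/
def RCompGraph {α : Type*} (le : α → α → Prop) : SimpleGraph α where
  Adj x y := x ≠ y ∧ (le x y ∨ le y x)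
  symm := ⟨fun x y h => ⟨Ne.symm h.1, h.2.symm⟩⟩
  loopless := ⟨fun x h => h.1 rfl⟩

/-- Connectedness of the comparability graph. -/
def RConnected {α : Type*} (le : α → α → Prop) : Prop := (RCompGraph le).Connected

/-- `P` contains `R1` as a peak-subposet: a maximal element `z` together with three
distinct pairwise incomparable elements strictly below `z`. -/
def ContainsR1 {α : Type*} (le : α → α → Prop) : Prop :=
  ∃ z a b c : α, RIsMax le z ∧ a ≠ b ∧ a ≠ c ∧ b ≠ c ∧
    RIncomp le a b ∧ RIncomp le a c ∧ RIncomp le b c ∧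
    RLt le a z ∧ RLt le b z ∧ RLt le c z

/-- `P` contains `R2` as a peak-subposet: distinct maximal `z ≠ z'` and elements
`y < x` with `x < z` and `x < z'`. -/
def ContainsR2 {α : Type*} (le : α → α → Prop) : Prop :=
  ∃ z z' y x : α, RIsMax le z ∧ RIsMax le z' ∧ z ≠ z' ∧
    RLt le y x ∧ RLt le x z ∧ RLt le x z'

/-- `P` contains `R3` as a peak-subposet: three distinct maximal elements with a
common strict lower bound. -/
def ContainsR3 {α : Type*} (le : α → α → Prop) : Prop :=
  ∃ z₁ z₂ z₃ x : α, RIsMax le z₁ ∧ RIsMax le z₂ ∧ RIsMax le z₃ ∧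
    z₁ ≠ z₂ ∧ z₁ ≠ z₃ ∧ z₂ ≠ z₃ ∧
    RLt le x z₁ ∧ RLt le x z₂ ∧ RLt le x z₃

/-- `P` contains the crown `R_{4,n}` as a peak-subposet (with `m = n + 2` maximal
elements `z i` and `m` pairwise incomparable elements `x i`, indices mod `m`). -/
def ContainsCrown {α : Type*} (le : α → α → Prop) (n : ℕ) : Prop :=
  ∃ z x : Fin (n + 2) → α,
    Function.Injective z ∧ Function.Injective x ∧
    (∀ j, RIsMax le (z j)) ∧
    (∀ i j, x i ≠ z j) ∧
    (∀ i j, i ≠ j → RIncomp le (x i) (x j)) ∧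
    (∀ i j, RLt le (x i) (z j) ↔ (j = i ∨ j = i - 1))

/-- A poset (given by its order relation `le`) is of type `A`: it is connected and
contains none of `R1`, `R2`, `R3` and the crowns `R_{4,n}` as a peak-subposet. -/
def IsTypeA {α : Type*} (le : α → α → Prop) : Prop :=
  RConnected le ∧ ¬ ContainsR1 le ∧ ¬ ContainsR2 le ∧ ¬ ContainsR3 le ∧
    ∀ n : ℕ, ¬ ContainsCrown le n

/-- The set of neighbors of a maximal element `z`: maximal elements `z' ≠ z` whose
down-cone meets the down-cone of `z`. -/
def NeighborSet {α : Type*} (le : α → α → Prop) (z : α) : Set α :=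
  {z' | RIsMax le z' ∧ z' ≠ z ∧ (RDown le z ∩ RDown le z').Nonempty}

/-! ## Quivers of type `A_n` and alien sets -/

/-- A quiver of type `A_n`: vertices `Fin n`, and for each pair of consecutive
vertices exactly one arrow joining them (in one of the two orientations), and no
other arrows. -/
structure TypeAQuiver (n : ℕ) where
  arr : Fin n → Fin n → Prop
  adjacent : ∀ x y : Fin n, arr x y → (y.val = x.val + 1 ∨ x.val = y.val + 1)
  exactlyOne : ∀ x y : Fin n, y.val = x.val + 1 → (arr x y ↔ ¬ arr y x)

/-- `z` is a sink: no arrow starts at `z`. -/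
def IsSinkQ {n : ℕ} (Q : TypeAQuiver n) (z : Fin n) : Prop := ∀ y, ¬ Q.arr z y

/-- `z` is a source: no arrow ends at `z`. -/
def IsSourceQ {n : ℕ} (Q : TypeAQuiver n) (z : Fin n) : Prop := ∀ y, ¬ Q.arr y z

/-- `Supp I(z)`: the set of vertices admitting a directed path to `z` in `Q`. -/
def SuppI {n : ℕ} (Q : TypeAQuiver n) (z : Fin n) : Set (Fin n) :=
  {x | Relation.ReflTransGen Q.arr x z}

/-- The arrow relation of the quiver `Q^F` obtained from `Q` by adding the extra
arrows in `F` (an extra arrow is recorded as the pair (source, target)). -/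
def QFarr {n : ℕ} (Q : TypeAQuiver n) (F : Set (Fin n × Fin n)) :
    Fin n → Fin n → Prop :=
  fun x y => Q.arr x y ∨ (x, y) ∈ F

/-- `F` is an alien set for the type `A_n` quiver `Q`. -/
structure IsAlienSet {n : ℕ} (Q : TypeAQuiver n) (F : Set (Fin n × Fin n)) : Prop where
  /-- (a) Source and target of each extra arrow lie in `Supp I(z)` for some sink `z`. -/
  sameSupp : ∀ p ∈ F, ∃ z : Fin n, IsSinkQ Q z ∧ p.1 ∈ SuppI Q z ∧ p.2 ∈ SuppI Q z
  /-- (b) The target of an extra arrow is not a source of `Q`, unless it is extremal. -/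
  targetNotSource : ∀ p ∈ F, IsSourceQ Q p.2 → (p.2.val = 0 ∨ p.2.val = n - 1)
  /-- (c) Each extra arrow is the unique directed path in `Q^F` from its source to
  its target: every such path is the single arrow itself. -/
  uniquePath : ∀ p ∈ F, ∀ l : List (Fin n),
    List.Chain (QFarr Q F) p.1 (l ++ [p.2]) → l = []
  /-- (d) `Q^F` is acyclic. -/
  acyclic : ∀ x : Fin n, ¬ Relation.TransGen (QFarr Q F) x x

/-- The order relation of the poset `P_{Q^F}` associated to the acyclic quiver
`Q^F`: `x ≤ y` iff there is a (possibly trivial) directed path from `x` to `y`. -/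
def leQF {n : ℕ} (Q : TypeAQuiver n) (F : Set (Fin n × Fin n)) :
    Fin n → Fin n → Prop :=
  Relation.ReflTransGen (QFarr Q F)

/-
A common lower bound `w` of distinct maximal elements `z, z'` lies strictly below both, so
anything strictly below `w` would produce `R2`; hence every common lower bound is minimal.
Two distinct minimal common lower bounds are incomparable, and together with `z, z'`
they form the crown `R_{4,0}`.
-/

section TypeA

variable {P : Type*} [PartialOrder P] {z z' w w' : P}

theorem rLt_iff_lt : RLt (· ≤ ·) w z ↔ w < z :=
  lt_iff_le_not_ge.symm

theorem IsMax.lt_of_le_of_le (hz : IsMax z) (hne : z ≠ z') (hwz : w ≤ z) (hwz' : w ≤ z') :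
    w < z :=
  hwz.lt_of_ne fun h => hne (hz.eq_of_le (h ▸ hwz'))

theorem isMin_of_le_of_le (hR2 : ¬ ContainsR2 (· ≤ · : P → P → Prop)) (hz : IsMax z)
    (hz' : IsMax z') (hne : z ≠ z') (hwz : w ≤ z) (hwz' : w ≤ z') : IsMin w := by
  intro y hyw
  by_contra hwy
  exact hR2 ⟨z, z', y, w, hz, hz', hne, ⟨hyw, hwy⟩,
    rLt_iff_lt.2 (hz.lt_of_le_of_le hne hwz hwz'),
    rLt_iff_lt.2 (hz'.lt_of_le_of_le hne.symm hwz' hwz)⟩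

theorem containsCrown_zero_of_lt (hz : IsMax z) (hz' : IsMax z') (hne : z ≠ z')
    (hww' : ¬ w ≤ w') (hw'w : ¬ w' ≤ w) (hwz : w < z) (hwz' : w < z') (hw'z : w' < z)
    (hw'z' : w' < z') : ContainsCrown (· ≤ · : P → P → Prop) 0 := by
  have hlt : ∀ i j : Fin 2, ![w, w'] i < ![z, z'] j := by
    simp [Fin.forall_fin_two, *]
  refine ⟨![z, z'], ![w, w'], injective_pair_iff_ne.2 hne,
    injective_pair_iff_ne.2 fun h => hww' h.le, Fin.forall_fin_two.2 ⟨hz, hz'⟩,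
    fun i j => (hlt i j).ne, ?_, fun i j => iff_of_true (rLt_iff_lt.2 (hlt i j)) ?_⟩
  · simp [Fin.forall_fin_two, RIncomp, *]
  · revert i j; decide

theorem subsingleton_Iic_inter_Iic (hR2 : ¬ ContainsR2 (· ≤ · : P → P → Prop))
    (hcrown : ¬ ContainsCrown (· ≤ · : P → P → Prop) 0) (hz : IsMax z) (hz' : IsMax z')
    (hne : z ≠ z') : (Set.Iic z ∩ Set.Iic z').Subsingleton := by
  rintro w ⟨hwz, hwz'⟩ w' ⟨hw'z, hw'z'⟩
  by_contra hww'
  have hw := isMin_of_le_of_le hR2 hz hz' hne hwz hwz'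
  have hw' := isMin_of_le_of_le hR2 hz hz' hne hw'z hw'z'
  exact hcrown <| containsCrown_zero_of_lt hz hz' hne
    (fun h => hww' (hw'.eq_of_le h)) (fun h => hww' (hw.eq_of_le h).symm)
    (hz.lt_of_le_of_le hne hwz hwz') (hz'.lt_of_le_of_le hne.symm hwz' hwz)
    (hz.lt_of_le_of_le hne hw'z hw'z') (hz'.lt_of_le_of_le hne.symm hw'z' hw'z)

end TypeA

theorem neighbors_iff_downcones_meet_in_unique_min_general {P : Type*} [PartialOrder P]
    (hA : IsTypeA (fun x y : P => x ≤ y))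
    (z z' : P) (hz : RIsMax (fun x y : P => x ≤ y) z)
    (hz' : RIsMax (fun x y : P => x ≤ y) z') (hne : z ≠ z') :
    (RDown (fun x y : P => x ≤ y) z ∩ RDown (fun x y : P => x ≤ y) z').Nonempty ↔
      ∃ x : P, RIsMin (fun x y : P => x ≤ y) x ∧
        RDown (fun x y : P => x ≤ y) z ∩ RDown (fun x y : P => x ≤ y) z' = {x} := by
  obtain ⟨-, -, hR2, -, hcrown⟩ := hA
  have hsub : (Set.Iic z ∩ Set.Iic z').Subsingleton :=
    subsingleton_Iic_inter_Iic hR2 (hcrown 0) hz hz' hne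
  constructor
  · rintro ⟨x, hxz, hxz'⟩
    exact ⟨x, isMin_of_le_of_le hR2 hz hz' hne hxz hxz', hsub.eq_singleton_of_mem ⟨hxz, hxz'⟩⟩
  · rintro ⟨x, -, hx⟩
    exact hx ▸ Set.singleton_nonempty x

/-- In a poset of type `A` with at least two maximal elements, two
distinct maximal elements `z, z'` are neighbors iff `D(z) ∩ D(z') = {x}` for some
minimal element `x`. -/
theorem neighbors_iff_downcones_meet_in_unique_min {P : Type*} [Fintype P] [PartialOrder P]
    (hA : IsTypeA (fun x y : P => x ≤ y))
    (htwo : ∃ z w : P, RIsMax (fun x y : P => x ≤ y) z ∧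
      RIsMax (fun x y : P => x ≤ y) w ∧ z ≠ w)
    (z z' : P) (hz : RIsMax (fun x y : P => x ≤ y) z)
    (hz' : RIsMax (fun x y : P => x ≤ y) z') (hne : z ≠ z') :
    (RDown (fun x y : P => x ≤ y) z ∩ RDown (fun x y : P => x ≤ y) z').Nonempty ↔
      ∃ x : P, RIsMin (fun x y : P => x ≤ y) x ∧
        RDown (fun x y : P => x ≤ y) z ∩ RDown (fun x y : P => x ≤ y) z' = {x} :=
  neighbors_iff_downcones_meet_in_unique_min_general hA z z' hz hz' hne
end

section
/- Let P be a poset of type A with at least two maximal elements. Then there exists a maximal element z of P that has exactly one neighbor, i.e., there is exactly one maximal element z' ≠ z with D(z) ∩ D(z') ≠ ∅. -/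
/-!
Join two maximal elements of `P` when their down-cones meet. The resulting graph is connected
because `P` is, and it is acyclic: along a cycle of length `n + 3`, pick a common lower bound of
each pair of consecutive vertices; if none of these lies below a third vertex of the cycle, they
form a crown `R_{4,n+1}` with the cycle, and otherwise we have an `R3`. A finite tree with at least
two vertices has a leaf, which is a maximal element with exactly one neighbor.
-/

open SimpleGraph

section
variable {P : Type*} [PartialOrder P]

theorem rLt_iff_lt_s3 {x y : P} : RLt (fun x y : P => x ≤ y) x y ↔ x < y :=
  lt_iff_le_not_ge.symm

theorem IsMax.lt_of_le_of_le_s3 {x z z' : P} (hz : IsMax z) (hne : z ≠ z') (hxz : x ≤ z)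
    (hxz' : x ≤ z') : x < z :=
  hxz.lt_of_ne fun h => hne (le_antisymm (h ▸ hxz') (hz (h ▸ hxz')))

theorem not_le_of_not_containsR3 (hR3 : ¬ ContainsR3 (fun x y : P => x ≤ y)) {x a b c : P}
    (ha : IsMax a) (hb : IsMax b) (hc : IsMax c) (hab : a ≠ b) (hac : a ≠ c) (hbc : b ≠ c)
    (hxa : x ≤ a) (hxb : x ≤ b) : ¬ x ≤ c := fun hxc =>
  hR3 ⟨a, b, c, x, ha, hb, hc, hab, hac, hbc, rLt_iff_lt_s3.2 (ha.lt_of_le_of_le_s3 hab hxa hxb),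
    rLt_iff_lt_s3.2 (hb.lt_of_le_of_le_s3 hbc hxb hxc),
    rLt_iff_lt_s3.2 (hc.lt_of_le_of_le_s3 hac.symm hxc hxa)⟩

variable (P) in
def maxNeighborGraph : SimpleGraph {z : P // IsMax z} where
  Adj z w := z ≠ w ∧ ∃ x, x ≤ (z : P) ∧ x ≤ (w : P)
  symm := ⟨fun _ _ h => ⟨h.1.symm, h.2.imp fun _ => And.symm⟩⟩
  loopless := ⟨fun _ h => h.1 rfl⟩

@[simp]
theorem maxNeighborGraph_adj {z w : {z : P // IsMax z}} :
    (maxNeighborGraph P).Adj z w ↔ z ≠ w ∧ ∃ x, x ≤ (z : P) ∧ x ≤ (w : P) :=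
  Iff.rfl

theorem mem_neighborSet_iff {z z' : P} (hz : IsMax z) :
    z' ∈ NeighborSet (fun x y : P => x ≤ y) z ↔
      ∃ hz' : IsMax z', (maxNeighborGraph P).Adj ⟨z, hz⟩ ⟨z', hz'⟩ := by
  simp only [NeighborSet, RDown, maxNeighborGraph_adj, Set.mem_ofPred_eq, Set.Nonempty,
    Set.mem_inter_iff]
  constructor
  · rintro ⟨hz', hne, x, hxz, hxz'⟩
    exact ⟨hz', fun h => hne (congrArg Subtype.val h).symm, x, hxz, hxz'⟩
  · rintro ⟨hz', hne, x, hxz, hxz'⟩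
    exact ⟨hz', fun h => hne (Subtype.ext h.symm), x, hxz, hxz'⟩

theorem existsUnique_mem_neighborSet_iff {z : {z : P // IsMax z}} :
    (∃! z' : P, z' ∈ NeighborSet (fun x y : P => x ≤ y) z) ↔
      ∃! w, (maxNeighborGraph P).Adj z w := by
  simp only [mem_neighborSet_iff z.2]
  constructor
  · rintro ⟨z', ⟨hz', hadj⟩, huniq⟩
    exact ⟨⟨z', hz'⟩, hadj, fun w hw => Subtype.ext (huniq w ⟨w.2, hw⟩)⟩
  · rintro ⟨w, hadj, huniq⟩
    exact ⟨w, ⟨w.2, hadj⟩, fun z' ⟨hz', h⟩ => congrArg Subtype.val (huniq ⟨z', hz'⟩ h)⟩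

theorem containsCrown_of_cycleGraph_isContained (hR3 : ¬ ContainsR3 (fun x y : P => x ≤ y))
    {n : ℕ} (hcyc : cycleGraph (n + 3) ⊑ maxNeighborGraph P) :
    ContainsCrown (fun x y : P => x ≤ y) (n + 1) := by
  obtain ⟨f⟩ := hcyc
  set z : Fin (n + 3) → P := fun i => f i
  have hz : Function.Injective z := Subtype.val_injective.comp f.injective
  have hmax (i) : IsMax (z i) := (f i).2
  have hzne {i j} (h : i ≠ j) : z i ≠ z j := hz.ne h
  have hpred_ne (i : Fin (n + 3)) : i - 1 ≠ i := by
    rw [Ne, sub_eq_self]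
    exact one_ne_zero
  have hpred_pred_ne (i : Fin (n + 3)) : i - 1 - 1 ≠ i := by
    rw [sub_sub, Ne, sub_eq_self, Fin.ext_iff, Fin.val_add]
    simp [Nat.mod_eq_of_lt (show 2 < n + 3 by omega)]
  have hadj (i : Fin (n + 3)) : (maxNeighborGraph P).Adj (f (i - 1)) (f i) :=
    f.toHom.map_adj (by simp [cycleGraph_adj])
  choose x hx_pred hx using fun i => (maxNeighborGraph_adj.1 (hadj i)).2
  have hbelow (i j) : x i ≤ z j ↔ j = i ∨ j = i - 1 := by
    refine ⟨fun h => ?_, by rintro (h | h) <;> rw [h]; exacts [hx i, hx_pred i]⟩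
    by_contra! hj
    exact not_le_of_not_containsR3 hR3 (hmax i) (hmax (i - 1)) (hmax j) (hzne (hpred_ne i).symm)
      (hzne (Ne.symm hj.1)) (hzne fun h => hj.2 h.symm) (hx i) (hx_pred i) h
  have hlt (i j) : x i < z j ↔ j = i ∨ j = i - 1 := by
    refine ⟨fun h => (hbelow i j).1 h.le, ?_⟩
    rintro (h | h) <;> rw [h]
    · exact (hmax i).lt_of_le_of_le_s3 (hzne (hpred_ne i).symm) (hx i) (hx_pred i)
    · exact (hmax (i - 1)).lt_of_le_of_le_s3 (hzne (hpred_ne i)) (hx_pred i) (hx i)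
  -- `x i ≤ x j` forces `j = i - 1`, and then `x i` also lies below `z (i - 1 - 1)`.
  have hincomp {i j} (hij : i ≠ j) : ¬ x i ≤ x j := fun h => by
    rcases (hbelow i j).1 (h.trans (hx j)) with rfl | rfl
    · exact hij rfl
    · rcases (hbelow i (i - 1 - 1)).1 (h.trans (hx_pred _)) with h' | h'
      · exact hpred_pred_ne i h'
      · exact hpred_ne _ h'
  refine ⟨z, x, hz, fun i j h => by_contra fun hij => hincomp hij h.le, hmax,
    fun i j h => (hmax j).not_lt (h ▸ (hlt i i).2 (Or.inl rfl)),
    fun i j hij => ⟨hincomp hij, hincomp (Ne.symm hij)⟩, fun i j => rLt_iff_lt_s3.trans (hlt i j)⟩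

theorem maxNeighborGraph_isAcyclic (hR3 : ¬ ContainsR3 (fun x y : P => x ≤ y))
    (hcrown : ∀ n, ¬ ContainsCrown (fun x y : P => x ≤ y) n) : (maxNeighborGraph P).IsAcyclic := by
  intro v c hc
  obtain ⟨n, hn⟩ : ∃ n, c.length = n + 3 := ⟨c.length - 3, by grind [hc.three_le_length]⟩
  exact hcrown (n + 1) (containsCrown_of_cycleGraph_isContained hR3
    ((cycleGraph_isContained_iff (by omega)).2 ⟨v, c, hc, hn⟩))

theorem maxNeighborGraph_preconnected [Finite P] (hP : RConnected (fun x y : P => x ≤ y)) :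
    (maxNeighborGraph P).Preconnected := by
  choose M hM using fun a : P => Finite.exists_le_maximal (p := fun _ => True) (a := a) trivial
  let top (a : P) : {z : P // IsMax z} := ⟨M a, maximal_true.1 (hM a).2⟩
  have hstep {a b : P} (h : (RCompGraph (fun x y : P => x ≤ y)).Adj a b) :
      (maxNeighborGraph P).Reachable (top a) (top b) := by
    by_cases he : top a = top b
    · exact he ▸ Reachable.refl _
    · refine Adj.reachable (maxNeighborGraph_adj.2 ⟨he, ?_⟩)
      rcases h.2 with h | h
      · exact ⟨a, (hM a).1, h.trans (hM b).1⟩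
      · exact ⟨b, h.trans (hM a).1, (hM b).1⟩
  have hreach {a b : P} (p : (RCompGraph (fun x y : P => x ≤ y)).Walk a b) :
      (maxNeighborGraph P).Reachable (top a) (top b) := by
    induction p with
    | nil => rfl
    | cons h _ ih => exact (hstep h).trans ih
  have htop (z : {z : P // IsMax z}) : top z = z := Subtype.ext (z.2.eq_of_le (hM z).1).symm
  intro z w
  obtain ⟨p⟩ := hP.preconnected z w
  simpa only [htop] using hreach p

end

/-- A poset of type `A` with at least two maximal elements has a
maximal element with exactly one neighbor. -/
theorem exists_max_with_unique_neighbor {P : Type*} [Fintype P] [PartialOrder P]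
    (hA : IsTypeA (fun x y : P => x ≤ y))
    (htwo : ∃ z w : P, RIsMax (fun x y : P => x ≤ y) z ∧
      RIsMax (fun x y : P => x ≤ y) w ∧ z ≠ w) :
    ∃ z : P, RIsMax (fun x y : P => x ≤ y) z ∧
      ∃! z' : P, z' ∈ NeighborSet (fun x y : P => x ≤ y) z := by
  classical
  obtain ⟨hconn, -, -, hR3, hcrown⟩ := hA
  obtain ⟨z, w, hz, hw, hzw⟩ := htwo
  have : Nontrivial {z : P // IsMax z} := ⟨⟨z, hz⟩, ⟨w, hw⟩, fun h => hzw (congrArg Subtype.val h)⟩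
  have htree : (maxNeighborGraph P).IsTree :=
    ⟨⟨maxNeighborGraph_preconnected hconn⟩, maxNeighborGraph_isAcyclic hR3 hcrown⟩
  obtain ⟨v, hv⟩ := htree.exists_vert_degree_one_of_nontrivial
  exact ⟨v, v.2, existsUnique_mem_neighborSet_iff.2 (degree_eq_one_iff_existsUnique_adj.1 hv)⟩
end

section
/- Let Q be a quiver of type A_n (n ≥ 1), let F be an alien set for Q, and let z be a sink of Q. Then for every vertex x, there is a directed path from x to z in Q^F if and only if there is a directed path from x to z in Q; equivalently, the down-cone of z in the associated poset P_{Q^F} equals Supp I(z). -/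
/-!
Every vertex of a type `A_n` quiver that is not a source, and every extremal vertex, has at most
one outgoing arrow, so from such a vertex at most one sink can be reached. An extra arrow `a → c`
of an alien set lies in `Supp I(z')` for some sink `z'`, and its target `c` is of this kind; hence
if `c` reaches the sink `z` in `Q`, then `z' = z` and `a` reaches `z` in `Q` as well. Replacing the
extra arrows of a path one at a time turns any path to `z` in `Q^F` into a path in `Q`.
-/

namespace Relation

variable {α : Type*} {r : α → α → Prop}

theorem eq_of_reflTransGen_of_subsingleton_out
    (hr : ∀ a b, r a b → {c | r b c}.Subsingleton) {x z₁ z₂ : α}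
    (hx : {y | r x y}.Subsingleton) (h₁ : ReflTransGen r x z₁) (h₂ : ReflTransGen r x z₂)
    (hz₁ : ∀ y, ¬ r z₁ y) (hz₂ : ∀ y, ¬ r z₂ y) : z₁ = z₂ := by
  induction h₁ using ReflTransGen.head_induction_on generalizing z₂ with
  | refl =>
    rcases h₂.cases_head with rfl | ⟨w, hw, _⟩
    · rfl
    · exact absurd hw (hz₁ w)
  | @head a b hab _ ih =>
    rcases h₂.cases_head with rfl | ⟨w, hw, hw₂⟩
    · exact absurd hab (hz₂ _)
    · obtain rfl : w = b := hx hw hab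
      exact ih (hr _ _ hab) hw₂ hz₂

end Relation

namespace TypeAQuiver

variable {n : ℕ} (Q : TypeAQuiver n)

theorem not_arr_of_arr {x y : Fin n} (h : Q.arr x y) : ¬ Q.arr y x := by
  rcases Q.adjacent x y h with hxy | hyx
  · exact (Q.exactlyOne x y hxy).mp h
  · exact fun h' => (Q.exactlyOne y x hyx).mp h' h

theorem subsingleton_out_of_arr {w x : Fin n} (hw : Q.arr w x) : {y | Q.arr x y}.Subsingleton := by
  intro a ha b hb
  have haw : a.val ≠ w.val := fun h => Q.not_arr_of_arr hw (Fin.ext h ▸ ha)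
  have hbw : b.val ≠ w.val := fun h => Q.not_arr_of_arr hw (Fin.ext h ▸ hb)
  have := Q.adjacent w x hw
  have := Q.adjacent x a ha
  have := Q.adjacent x b hb
  exact Fin.ext (by omega)

theorem subsingleton_out_of_extremal {x : Fin n} (hx : x.val = 0 ∨ x.val = n - 1) :
    {y | Q.arr x y}.Subsingleton := by
  intro a ha b hb
  have := Q.adjacent x a ha
  have := Q.adjacent x b hb
  have := a.isLt
  have := b.isLt
  exact Fin.ext (by omega)

theorem subsingleton_out_of_mem_alienSet {F : Set (Fin n × Fin n)} (hF : IsAlienSet Q F)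
    {p : Fin n × Fin n} (hp : p ∈ F) : {y | Q.arr p.2 y}.Subsingleton := by
  by_cases hsrc : IsSourceQ Q p.2
  · exact Q.subsingleton_out_of_extremal (hF.targetNotSource p hp hsrc)
  · obtain ⟨w, hw⟩ : ∃ w, Q.arr w p.2 := by simpa [IsSourceQ] using hsrc
    exact Q.subsingleton_out_of_arr hw

theorem reflTransGen_arr_of_leQF_sink {F : Set (Fin n × Fin n)} (hF : IsAlienSet Q F)
    {x z : Fin n} (hz : IsSinkQ Q z) (h : leQF Q F x z) : Relation.ReflTransGen Q.arr x z := by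
  induction h using Relation.ReflTransGen.head_induction_on with
  | refl => exact .refl
  | @head a c hac _ ih =>
    rcases hac with hQ | hF'
    · exact ih.head hQ
    · obtain ⟨z', hz', ha, hc⟩ := hF.sameSupp _ hF'
      obtain rfl : z' = z :=
        Relation.eq_of_reflTransGen_of_subsingleton_out (fun _ _ => Q.subsingleton_out_of_arr)
          (Q.subsingleton_out_of_mem_alienSet hF hF') hc ih hz' hz
      exact ha

end TypeAQuiver

theorem downcone_of_sink_eq_suppI_general {n : ℕ}
    (Q : TypeAQuiver n) (F : Set (Fin n × Fin n)) (hF : IsAlienSet Q F)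
    (z : Fin n) (hz : IsSinkQ Q z) :
    (∀ x : Fin n, leQF Q F x z ↔ Relation.ReflTransGen Q.arr x z) ∧
      RDown (leQF Q F) z = SuppI Q z := by
  have hiff : ∀ x, leQF Q F x z ↔ Relation.ReflTransGen Q.arr x z := fun x =>
    ⟨Q.reflTransGen_arr_of_leQF_sink hF hz, Relation.ReflTransGen.mono (fun _ _ => Or.inl) _ _⟩
  exact ⟨hiff, Set.ext hiff⟩

/-- For a quiver `Q` of type `A_n` (`n ≥ 1`), an alien set `F` for
`Q`, and a sink `z` of `Q`: a vertex `x` admits a directed path to `z` in `Q^F`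
iff it does in `Q`; equivalently, the down-cone of `z` in `P_{Q^F}` is `Supp I(z)`. -/
theorem downcone_of_sink_eq_suppI {n : ℕ} (hn : 1 ≤ n)
    (Q : TypeAQuiver n) (F : Set (Fin n × Fin n)) (hF : IsAlienSet Q F)
    (z : Fin n) (hz : IsSinkQ Q z) :
    (∀ x : Fin n, leQF Q F x z ↔ Relation.ReflTransGen Q.arr x z) ∧
      RDown (leQF Q F) z = SuppI Q z :=
  downcone_of_sink_eq_suppI_general Q F hF z hz
end
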